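/- Let μ, σ : [0,∞)² → [0,∞) and define H(x,p) = (p₁ − μ(x))₊ (p₂ − μ(x))₊ − σ(x)². Then for all x, y ∈ ℝ²₊ and all p ∈ [0,∞)², H(y,p) − H(x,p) ≤ 2|p| (μ(x) − μ(y))₊ + σ(x)² − σ(y)². -/

import Mathlib

noncomputable section
open Set Metric Filter MeasureTheory

/-- The plane `ℝ²` with the Euclidean norm. -/
abbrev E2 : Type := EuclideanSpace ℝ (Fin 2)

/-- The point `(a,b) ∈ ℝ²`. -/
def pt (a b : ℝ) : E2 := (WithLp.equiv 2 (Fin 2 → ℝ)).symm ![a, b]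

/-- The closed quadrant `[0,∞)²`. -/
def nonnegQuad : Set E2 := {x | 0 ≤ x 0 ∧ 0 ≤ x 1}

/-- The open quadrant `ℝ²₊ = (0,∞)²`. -/
def posQuad : Set E2 := {x | 0 < x 0 ∧ 0 < x 1}

/-- The boundary `∂ℝ²₊ = {x ∈ [0,∞)² : x₁ = 0 or x₂ = 0}`. -/
def bdryQuad : Set E2 := {x | (0 ≤ x 0 ∧ 0 ≤ x 1) ∧ (x 0 = 0 ∨ x 1 = 0)}

/-- The box `[0,R]²`. -/
def box (R : ℝ) : Set E2 := {x | x 0 ∈ Icc 0 R ∧ x 1 ∈ Icc 0 R}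

/-- The open rectangle `(z,∞)`. -/
def openRect (z : E2) : Set E2 := {x | z 0 < x 0 ∧ z 1 < x 1}

/-- The closed rectangle `[z,∞)`. -/
def closedRect (z : E2) : Set E2 := {x | z 0 ≤ x 0 ∧ z 1 ≤ x 1}

/-- Admissible monotone `C¹` curves `γ = (γ₁,γ₂) : [0,1] → [0,∞)²`. -/
def Adm (γ₁ γ₂ : ℝ → ℝ) : Prop :=
  ContDiff ℝ 1 γ₁ ∧ ContDiff ℝ 1 γ₂ ∧
  (∀ t ∈ Icc (0:ℝ) 1, 0 ≤ γ₁ t ∧ 0 ≤ γ₂ t) ∧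
  (∀ t ∈ Icc (0:ℝ) 1, 0 ≤ deriv γ₁ t ∧ 0 ≤ deriv γ₂ t)

/-- The functional `J_{μ,σ}(γ) = ∫₀¹ μ(γ)(γ₁'+γ₂') + 2σ(γ)√(γ₁'γ₂') dt`. -/
def Jint (μ σ : E2 → ℝ) (γ₁ γ₂ : ℝ → ℝ) : ℝ :=
  ∫ t in (0:ℝ)..1,
    (μ (pt (γ₁ t) (γ₂ t)) * (deriv γ₁ t + deriv γ₂ t)
      + 2 * σ (pt (γ₁ t) (γ₂ t)) * Real.sqrt (deriv γ₁ t * deriv γ₂ t))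

/-- The value function `W_{μ,σ}(x,y)` of the variational problem. -/
def Wval (μ σ : E2 → ℝ) (x y : E2) : ℝ :=
  sSup {J : ℝ | ∃ γ₁ γ₂ : ℝ → ℝ, Adm γ₁ γ₂ ∧
    γ₁ 0 = x 0 ∧ γ₂ 0 = x 1 ∧ γ₁ 1 = y 0 ∧ γ₂ 1 = y 1 ∧ J = Jint μ σ γ₁ γ₂}

/-- The value function `U_{μ,σ}(x) = W_{μ,σ}(0,x)`. -/
def Uval (μ σ : E2 → ℝ) (x : E2) : ℝ := Wval μ σ 0 x

/-- A modulus of continuity. -/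
def IsModulus (ω : ℝ → ℝ) : Prop :=
  (∀ t, 0 ≤ ω t) ∧ MonotoneOn ω (Ici 0) ∧ Tendsto ω (nhdsWithin 0 (Ioi 0)) (nhds 0)

/-- Data for the geometric setup: `f` parameterizes the strictly decreasing curve `Γ`
(as `t ↦ (t, f t)`, `t ∈ [0,1]`); for each `i ∈ ℤ`, `g i` parameterizes the strictly
increasing curve `Γᵢ` (as `t ↦ (t, g i t)`, `t ∈ I i`); and `Om i` is the connected
component `Ωᵢ`. -/
structure GeomData where
  f : ℝ → ℝ
  I : ℤ → Set ℝ
  g : ℤ → ℝ → ℝ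
  Om : ℤ → Set E2

namespace GeomData
variable (G : GeomData)

/-- The curve `Γ`. -/
def Gamma : Set E2 := (fun t => pt t (G.f t)) '' Icc 0 1

/-- The region `Ω`: the bounded component of `[0,∞)² ∖ Γ`. -/
def Omega : Set E2 := {x ∈ nonnegQuad | x 0 ≤ 1 ∧ x 1 < G.f (x 0)}

/-- The curve `Γᵢ`. -/
def GammaI (i : ℤ) : Set E2 := (fun t => pt t (G.g i t)) '' G.I i

/-- The complement of `⋃ᵢ Γᵢ` in `[0,∞)² ∖ Ω`. -/
def Scomp : Set E2 := (nonnegQuad \ G.Omega) \ ⋃ i, G.GammaI i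

/-- The set `Ω_θ = {x ∈ Ω : dist(x,Γ) > θ}`. -/
def OmegaTheta (θ : ℝ) : Set E2 := {x ∈ G.Omega | θ < infDist x G.Gamma}

/-- The set `Ω_{i,θ} = {x ∈ Ωᵢ : dist(x,Γᵢ) > θ and dist(x,Γ_{i+1}) > θ}`. -/
def OmITheta (i : ℤ) (θ : ℝ) : Set E2 :=
  {x ∈ G.Om i | θ < infDist x (G.GammaI i) ∧ θ < infDist x (G.GammaI (i+1))}

end GeomData

/-- Validity of the geometric setup described in the paper. -/
structure GeomValid (G : GeomData) : Prop where
  f_cont : ContinuousOn G.f (Icc 0 1)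
  f_anti : StrictAntiOn G.f (Icc 0 1)
  f_zero : G.f 0 = 1
  f_one : G.f 1 = 0
  f_mem : ∀ t ∈ Icc (0:ℝ) 1, G.f t ∈ Icc (0:ℝ) 1
  I_conn : ∀ i, (G.I i).OrdConnected
  I_ne : ∀ i, (G.I i).Nonempty
  g_cont : ∀ i, ContinuousOn (G.g i) (G.I i)
  g_mono : ∀ i, StrictMonoOn (G.g i) (G.I i)
  curves_sub : ∀ i, G.GammaI i ⊆ nonnegQuad \ G.Omega
  curves_disj : Pairwise fun i j => Disjoint (G.GammaI i) (G.GammaI j)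
  curves_locfin : ∀ K : Set E2, IsCompact K → {i : ℤ | (G.GammaI i ∩ K).Nonempty}.Finite
  curves_unbdd : ∀ i, ¬ Bornology.IsBounded (G.GammaI i)
  curves_endpoint : ∀ i, (closure (G.GammaI i) ∩ frontier (nonnegQuad \ G.Omega)).Nonempty
  Om_ne : ∀ i, (G.Om i).Nonempty
  Om_comp : ∀ i, ∀ x ∈ G.Om i, G.Om i = connectedComponentIn G.Scomp x
  Om_cover : (⋃ i, G.Om i) = G.Scomp
  Om_bdry : ∀ i, G.GammaI i ⊆ frontier (G.Om (i-1)) ∩ frontier (G.Om i)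

/-- Hypothesis (F1). -/
def F1 (G : GeomData) (Clip : NNReal) (μ : E2 → ℝ) : Prop :=
  (∀ x ∈ nonnegQuad, 0 ≤ μ x) ∧ (∃ M, ∀ x ∈ nonnegQuad, μ x ≤ M) ∧
  UpperSemicontinuousOn μ nonnegQuad ∧
  (∀ x ∈ G.Omega, μ x = 0) ∧
  (∀ i, LipschitzOnWith Clip μ (G.Om i))

/-- Hypothesis (F1*) with parameter `θ`. -/
def F1star (G : GeomData) (Clip : NNReal) (θ : ℝ) (μ : E2 → ℝ) : Prop :=
  (∀ x ∈ nonnegQuad, 0 ≤ μ x) ∧ (∃ M, ∀ x ∈ nonnegQuad, μ x ≤ M) ∧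
  UpperSemicontinuousOn μ nonnegQuad ∧
  (∀ x ∈ G.OmegaTheta θ, μ x = 0) ∧
  (∀ i, LipschitzOnWith Clip μ (G.OmITheta i θ))

/-- Hypothesis (F2): the boundary source term. -/
def F2 (μs : E2 → ℝ) : Prop :=
  (∀ x ∈ bdryQuad, 0 ≤ μs x) ∧ (∃ M, ∀ x ∈ bdryQuad, μs x ≤ M) ∧
  (∀ x ∈ posQuad, μs x = 0) ∧
  UpperSemicontinuousOn μs bdryQuad ∧
  (∀ K : Set E2, IsCompact K →
    {x ∈ bdryQuad ∩ K | ¬ ContinuousWithinAt μs bdryQuad x}.Finite)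

/-- Hypothesis (F3). -/
def F3 (G : GeomData) (μ : E2 → ℝ) : Prop :=
  ∀ i : ℤ, ∀ x ∈ G.GammaI i, ∃ ε > 0, ∃ ζ : ℝ, (ζ = 1 ∨ ζ = -1) ∧
    ∀ y ∈ ball x ε ∩ G.GammaI i, ∀ L₁ L₂ : ℝ,
      Tendsto μ (nhdsWithin y (G.Om (i-1))) (nhds L₁) →
      Tendsto μ (nhdsWithin y (G.Om i)) (nhds L₂) →
      0 ≤ ζ * (L₁ - L₂)

/-- `μ` and `τ` satisfy (F3) simultaneously (same `ζ` at each point). -/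
def F3sim (G : GeomData) (μ τ : E2 → ℝ) : Prop :=
  ∀ i : ℤ, ∀ x ∈ G.GammaI i, ∃ ε > 0, ∃ ζ : ℝ, (ζ = 1 ∨ ζ = -1) ∧
    ∀ y ∈ ball x ε ∩ G.GammaI i,
      (∀ L₁ L₂ : ℝ,
        Tendsto μ (nhdsWithin y (G.Om (i-1))) (nhds L₁) →
        Tendsto μ (nhdsWithin y (G.Om i)) (nhds L₂) → 0 ≤ ζ * (L₁ - L₂)) ∧
      (∀ L₁ L₂ : ℝ,
        Tendsto τ (nhdsWithin y (G.Om (i-1))) (nhds L₁) →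
        Tendsto τ (nhdsWithin y (G.Om i)) (nhds L₂) → 0 ≤ ζ * (L₁ - L₂))

/-- The superdifferential `D⁺u(x)` of `u` relative to the set `O`. -/
def SuperDiffOn (O : Set E2) (u : E2 → ℝ) (x : E2) : Set E2 :=
  {p | ∀ ε > 0, ∃ δ > 0, ∀ y ∈ O, dist y x < δ →
    u y ≤ u x + (inner ℝ p (y - x) : ℝ) + ε * ‖y - x‖}

/-- The subdifferential `D⁻u(x)` of `u` relative to the set `O`. -/
def SubDiffOn (O : Set E2) (u : E2 → ℝ) (x : E2) : Set E2 :=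
  {p | ∀ ε > 0, ∃ δ > 0, ∀ y ∈ O, dist y x < δ →
    u x + (inner ℝ p (y - x) : ℝ) - ε * ‖y - x‖ ≤ u y}

/-- `u` is a viscosity subsolution of `H(x,Du) ≤ 0` on `O`. -/
def ViscSubsolOn (O : Set E2) (H : E2 → E2 → ℝ) (u : E2 → ℝ) : Prop :=
  ∀ x ∈ O, ∀ p ∈ SuperDiffOn O u x, liminf (fun y => H y p) (nhdsWithin x O) ≤ 0

/-- `v` is a viscosity supersolution of `H(x,Dv) ≥ a` on `O`. -/
def ViscSupersolOn (O : Set E2) (H : E2 → E2 → ℝ) (a : ℝ) (v : E2 → ℝ) : Prop :=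
  ∀ x ∈ O, ∀ p ∈ SubDiffOn O v x, a ≤ limsup (fun y => H y p) (nhdsWithin x O)

/-- The Hamiltonian `H(x,p) = (p₁ − μ(x))₊ (p₂ − μ(x))₊ − σ(x)²`. -/
def Ham (μ σ : E2 → ℝ) (x p : E2) : ℝ :=
  max (p 0 - μ x) 0 * max (p 1 - μ x) 0 - (σ x)^2

/-- The projection `π_ξ` onto `[0,ξ]`. -/
def ptrunc (ξ x : E2) : E2 := pt (min (x 0) (ξ 0)) (min (x 1) (ξ 1))

/-- `u` is a truncatable viscosity subsolution of `H(x,Du) ≤ 0` on `(z,∞)`. -/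
def TruncSubsolOn (z : E2) (H : E2 → E2 → ℝ) (u : E2 → ℝ) : Prop :=
  ViscSubsolOn (openRect z) H u ∧
  ∀ ξ ∈ openRect z, ViscSubsolOn (openRect z) H (fun x => u (ptrunc ξ x))

/-- `v` is monotone (non-decreasing in the componentwise order) on `[0,∞)²`. -/
def MonoQuad (v : E2 → ℝ) : Prop :=
  ∀ x y : E2, x ∈ nonnegQuad → y ∈ nonnegQuad → x 0 ≤ y 0 → x 1 ≤ y 1 → v x ≤ v y

/-- Lower semicontinuous envelope `f_*(x) = liminf_{y→x} f(y)`. -/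
def lscEnv (f : E2 → ℝ) (x : E2) : ℝ := liminf f (nhds x)

/-- Upper semicontinuous envelope `f^*(x) = limsup_{y→x} f(y)`. -/
def uscEnv (f : E2 → ℝ) (x : E2) : ℝ := limsup f (nhds x)

/-! With `a = (p₁ - μ(y))₊`, `b = (p₂ - μ(y))₊` and `a', b'` the same at `x`, write
`ab - a'b' = b (a - a') + a' (b - b')`. Each difference of positive parts is at most
`(μ(x) - μ(y))₊`, and since `μ ≥ 0` the factors `b, a'` are at most `|p|`; the `σ` terms
pass through unchanged. -/

theorem max_sub_zero_sub_max_sub_zero_le (t m m' : ℝ) :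
    max (t - m) 0 - max (t - m') 0 ≤ max (m' - m) 0 := by
  simpa using max_sub_max_le_max (t - m) 0 (t - m') 0

theorem mul_sub_mul_le_of_le_add {a b a' b' d P : ℝ} (hb : 0 ≤ b) (ha' : 0 ≤ a') (hd : 0 ≤ d)
    (ha : a ≤ a' + d) (hb' : b ≤ b' + d) (hbP : b ≤ P) (ha'P : a' ≤ P) :
    a * b - a' * b' ≤ 2 * P * d :=
  calc a * b - a' * b' = b * (a - a') + a' * (b - b') := by ring
    _ ≤ b * d + a' * d := by gcongr <;> linarith
    _ ≤ P * d + P * d := by gcongr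
    _ = 2 * P * d := by ring

theorem max_sub_zero_mul_sub_le {s t m m' P : ℝ} (hm : 0 ≤ m) (hm' : 0 ≤ m')
    (hs : s ≤ P) (ht : t ≤ P) (hP : 0 ≤ P) :
    max (s - m) 0 * max (t - m) 0 - max (s - m') 0 * max (t - m') 0
      ≤ 2 * P * max (m' - m) 0 := by
  refine mul_sub_mul_le_of_le_add (le_max_right _ _) (le_max_right _ _) (le_max_right _ _)
    ?_ ?_ (max_le (by linarith) hP) (max_le (by linarith) hP)
  · linarith [max_sub_zero_sub_max_sub_zero_le s m m']
  · linarith [max_sub_zero_sub_max_sub_zero_le t m m']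

theorem EuclideanSpace.apply_le_norm {ι : Type*} [Fintype ι] (p : EuclideanSpace ℝ ι) (i : ι) :
    p i ≤ ‖p‖ :=
  (le_abs_self _).trans (PiLp.norm_apply_le p i)

theorem Ham_sub_Ham (μ σ : E2 → ℝ) (x y p : E2) :
    Ham μ σ y p - Ham μ σ x p =
      (max (p 0 - μ y) 0 * max (p 1 - μ y) 0 - max (p 0 - μ x) 0 * max (p 1 - μ x) 0)
        + ((σ x) ^ 2 - (σ y) ^ 2) := by
  simp only [Ham]
  ring

theorem statement_10_general (μ σ : E2 → ℝ)
    (hμ0 : ∀ x ∈ nonnegQuad, 0 ≤ μ x)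
    (x y : E2) (hx : x ∈ posQuad) (hy : y ∈ posQuad)
    (p : E2) :
    Ham μ σ y p - Ham μ σ x p ≤ 2 * ‖p‖ * max (μ x - μ y) 0 + (σ x) ^ 2 - (σ y) ^ 2 := by
  have hμx : 0 ≤ μ x := hμ0 x ⟨hx.1.le, hx.2.le⟩
  have hμy : 0 ≤ μ y := hμ0 y ⟨hy.1.le, hy.2.le⟩
  have hprod := max_sub_zero_mul_sub_le hμy hμx (EuclideanSpace.apply_le_norm p 0)
    (EuclideanSpace.apply_le_norm p 1) (norm_nonneg p)
  linarith [Ham_sub_Ham μ σ x y p]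

/-- Proposition 3.10 / `prop:Hcont`: for the Hamiltonian
`H(x,p) = (p₁ − μ(x))₊ (p₂ − μ(x))₊ − σ(x)²`, for all `x, y ∈ ℝ²₊` and `p ∈ [0,∞)²`,
`H(y,p) − H(x,p) ≤ 2|p| (μ(x) − μ(y))₊ + σ(x)² − σ(y)²`. -/
theorem statement_10 (μ σ : E2 → ℝ)
    (hμ0 : ∀ x ∈ nonnegQuad, 0 ≤ μ x) (hσ0 : ∀ x ∈ nonnegQuad, 0 ≤ σ x)
    (x y : E2) (hx : x ∈ posQuad) (hy : y ∈ posQuad)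
    (p : E2) (hp : ∀ i, 0 ≤ p i) :
    Ham μ σ y p - Ham μ σ x p ≤ 2 * ‖p‖ * max (μ x - μ y) 0 + (σ x) ^ 2 - (σ y) ^ 2 :=
  statement_10_general μ σ hμ0 x y hx hy p
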